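/- arXiv:1407.3943 — 2 statements merged into one kernel-verified Lean document; each statement's English description precedes it below -/
import Mathlib

section
/- Let Q be a symmetric positive semidefinite d×d real matrix, γ ∈ ℝ^d, and let ν be a measure on ℝ^d with ν({0}) = 0 and ∫ min(|x|²,1) ν(dx) < ∞. Define the Lévy–Khinchine exponent ψ(z) = −½⟨z,Qz⟩ + i⟨γ,z⟩ + ∫_{ℝ^d} (e^{i⟨z,x⟩} − 1 − i⟨z,x⟩ 1_{|x|≤1}(x)) ν(dx), z ∈ ℝ^d. Let c > 0 and assume the logarithmic moment condition ∫_{|x|>2} log|x| ν(dx) < ∞. Then for every z ∈ ℝ^d the function s ↦ ψ(e^{−cs} z) is Lebesgue integrable on [0,∞), i.e. ∫_0^∞ |ψ(e^{−cs} z)| ds < ∞. -/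
open MeasureTheory Filter Topology
open scoped RealInnerProductSpace

/-- The Lévy–Khinchine exponent associated with a generating triplet `(Q, ν, γ)` on `ℝ^d`:
`ψ(z) = −½⟨z,Qz⟩ + i⟨γ,z⟩ + ∫ (e^{i⟨z,x⟩} − 1 − i⟨z,x⟩ 1_{|x|≤1}(x)) ν(dx)`. -/
noncomputable def levyExponent {d : ℕ} (Q : Matrix (Fin d) (Fin d) ℝ)
    (γ : EuclideanSpace ℝ (Fin d)) (ν : Measure (EuclideanSpace ℝ (Fin d)))
    (z : EuclideanSpace ℝ (Fin d)) : ℂ :=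
  -(1 / 2 : ℂ) * ((∑ i, ∑ j, z i * Q i j * z j : ℝ) : ℂ)
    + Complex.I * ((⟪γ, z⟫ : ℝ) : ℂ)
    + ∫ x, (Complex.exp (Complex.I * ((⟪z, x⟫ : ℝ) : ℂ)) - 1
        - (if ‖x‖ ≤ 1 then Complex.I * ((⟪z, x⟫ : ℝ) : ℂ) else 0)) ∂ν

/-! The integrand `F(w, x)` of `ψ(w)` is `O(‖w‖² ‖x‖²)` for `‖x‖ ≤ 1` and `O(min(1, ‖w‖ ‖x‖))`
for `‖x‖ > 1`. Hence along `w = e^{-cs} z` everything except the large-jump part of the integral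
is `O(e^{-cs})`. For the large jumps, integrate in `s` first (Tonelli):
`∫₀^∞ min(1, a e^{-cs}) ds ≤ (log⁺ a + 1) / c`, and with `a = ‖z‖ ‖x‖` the logarithmic moment
of `ν` makes the result integrable over `{‖x‖ > 1}`. -/

open scoped Real

namespace Complex

theorem norm_exp_I_mul_ofReal_sub_one_le_two_mul_min (θ : ℝ) :
    ‖exp (I * θ) - 1‖ ≤ 2 * min 1 |θ| := by
  rw [mul_min_of_nonneg _ _ zero_le_two, mul_one]
  refine le_min ?_ (Real.norm_exp_I_mul_ofReal_sub_one_le.trans ?_)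
  · calc ‖exp (I * θ) - 1‖ ≤ ‖exp (I * θ)‖ + ‖(1 : ℂ)‖ := norm_sub_le _ _
      _ = 2 := by rw [norm_exp_I_mul_ofReal, norm_one]; norm_num
  · rw [Real.norm_eq_abs]; linarith [abs_nonneg θ]

theorem norm_exp_I_mul_ofReal_sub_one_sub_le (θ : ℝ) :
    ‖exp (I * θ) - 1 - I * θ‖ ≤ 2 * θ ^ 2 := by
  have hnorm : ‖I * (θ : ℂ)‖ = |θ| := by simp
  rcases le_or_gt |θ| 1 with hθ | hθ
  · have := norm_exp_sub_one_sub_id_le (x := I * θ) (hnorm ▸ hθ)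
    rw [hnorm, sq_abs] at this
    nlinarith [sq_nonneg θ]
  · calc ‖exp (I * θ) - 1 - I * θ‖ ≤ ‖exp (I * θ) - 1‖ + ‖I * (θ : ℂ)‖ := norm_sub_le _ _
      _ ≤ |θ| + |θ| := by
        rw [hnorm, ← Real.norm_eq_abs]; gcongr; exact Real.norm_exp_I_mul_ofReal_sub_one_le
      _ ≤ 2 * θ ^ 2 := by nlinarith [sq_abs θ]

end Complex

section LevyIntegrand

variable {E : Type*} [NormedAddCommGroup E]

lemma indicator_one_lt_norm_min_le (r : ℝ) (x : E) :
    {y : E | 1 < ‖y‖}.indicator (fun y => min 1 (r * ‖y‖)) x ≤ min (‖x‖ ^ 2) 1 := by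
  by_cases hx : 1 < ‖x‖
  · rw [Set.indicator_of_mem (show x ∈ {y : E | 1 < ‖y‖} from hx),
      min_eq_right (a := ‖x‖ ^ 2) (by nlinarith)]
    exact min_le_left _ _
  · rw [Set.indicator_of_notMem (show x ∉ {y : E | 1 < ‖y‖} from hx)]
    positivity

variable [InnerProductSpace ℝ E]

noncomputable def levyIntegrand (w x : E) : ℂ :=
  Complex.exp (Complex.I * ((⟪w, x⟫ : ℝ) : ℂ)) - 1
    - (if ‖x‖ ≤ 1 then Complex.I * ((⟪w, x⟫ : ℝ) : ℂ) else 0)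

lemma norm_levyIntegrand_le (w x : E) :
    ‖levyIntegrand w x‖ ≤ 2 * (‖w‖ ^ 2 * min (‖x‖ ^ 2) 1
      + {y : E | 1 < ‖y‖}.indicator (fun y => min 1 (‖w‖ * ‖y‖)) x) := by
  have hθ : |⟪w, x⟫| ≤ ‖w‖ * ‖x‖ := abs_real_inner_le_norm w x
  by_cases hx : ‖x‖ ≤ 1
  · rw [levyIntegrand, if_pos hx, Set.indicator_of_notMem (by simpa using hx),
      min_eq_left (by nlinarith [norm_nonneg x]), add_zero]
    calc _ ≤ 2 * ⟪w, x⟫ ^ 2 := Complex.norm_exp_I_mul_ofReal_sub_one_sub_le _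
      _ ≤ 2 * (‖w‖ * ‖x‖) ^ 2 := by gcongr 2 * ?_; exact sq_le_sq.2 (hθ.trans (le_abs_self _))
      _ = _ := by ring
  · rw [levyIntegrand, if_neg hx, sub_zero, Set.indicator_of_mem (by simpa using hx)]
    calc _ ≤ 2 * min 1 |⟪w, x⟫| := Complex.norm_exp_I_mul_ofReal_sub_one_le_two_mul_min _
      _ ≤ 2 * min 1 (‖w‖ * ‖x‖) := by gcongr
      _ ≤ _ := by gcongr; exact le_add_of_nonneg_left (by positivity)

lemma norm_levyIntegrand_le_of_norm_le {R : ℝ} {w : E} (hw : ‖w‖ ≤ R) (x : E) :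
    ‖levyIntegrand w x‖ ≤ 2 * (R ^ 2 + 1) * min (‖x‖ ^ 2) 1 := by
  have hwR : ‖w‖ ^ 2 ≤ R ^ 2 := pow_le_pow_left₀ (norm_nonneg w) hw 2
  have hind := indicator_one_lt_norm_min_le ‖w‖ x
  calc _ ≤ _ := norm_levyIntegrand_le w x
    _ ≤ 2 * (R ^ 2 * min (‖x‖ ^ 2) 1 + min (‖x‖ ^ 2) 1) := by gcongr
    _ = _ := by ring

lemma continuous_levyIntegrand_left (x : E) : Continuous fun w : E => levyIntegrand w x := by
  by_cases hx : ‖x‖ ≤ 1 <;> simp only [levyIntegrand, hx, if_true, if_false] <;> fun_prop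

variable [MeasurableSpace E] [OpensMeasurableSpace E]

lemma measurable_levyIntegrand (w : E) : Measurable (levyIntegrand w) := by
  refine Measurable.sub (by fun_prop) (Measurable.ite ?_ (by fun_prop) measurable_const)
  exact measurableSet_le continuous_norm.measurable measurable_const

end LevyIntegrand

section LevyMeasure

variable {E : Type*} [NormedAddCommGroup E] [MeasurableSpace E] [OpensMeasurableSpace E]
  {ν : Measure E}

lemma integrable_min_sq_norm_one (hν2 : ∫⁻ x, ENNReal.ofReal (min (‖x‖ ^ 2) 1) ∂ν < ⊤) :
    Integrable (fun x => min (‖x‖ ^ 2) 1) ν :=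
  ⟨by fun_prop, (hasFiniteIntegral_iff_ofReal (.of_forall fun x => by positivity)).2 hν2⟩

lemma measure_one_lt_norm_le_lintegral (ν : Measure E) :
    ν {x | 1 < ‖x‖} ≤ ∫⁻ x, ENNReal.ofReal (min (‖x‖ ^ 2) 1) ∂ν := by
  rw [← lintegral_indicator_one (measurableSet_lt measurable_const measurable_norm)]
  refine lintegral_mono fun x => Set.indicator_apply_le' (fun (hx : 1 < ‖x‖) => ?_) fun _ => zero_le
  rw [min_eq_right (a := ‖x‖ ^ 2) (by nlinarith), ENNReal.ofReal_one, Pi.one_apply]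

lemma lintegral_posLog_norm_le (ν : Measure E) :
    ∫⁻ x, ENNReal.ofReal (log⁺ ‖x‖) ∂ν ≤ ∫⁻ x, ENNReal.ofReal (min (‖x‖ ^ 2) 1) ∂ν
      + ∫⁻ x in {x | 2 < ‖x‖}, ENNReal.ofReal (Real.log ‖x‖) ∂ν := by
  have hS : MeasurableSet {x : E | 2 < ‖x‖} := measurableSet_lt measurable_const measurable_norm
  rw [← lintegral_indicator hS, ← lintegral_add_left (by fun_prop)]
  refine lintegral_mono fun x => ?_
  by_cases hx : 2 < ‖x‖
  · rw [Set.indicator_of_mem (show x ∈ {x : E | 2 < ‖x‖} from hx),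
      Real.posLog_eq_log (by rw [abs_norm]; linarith)]
    exact le_add_self
  · rw [Set.indicator_of_notMem (show x ∉ {x : E | 2 < ‖x‖} from hx), add_zero]
    refine ENNReal.ofReal_le_ofReal (max_le (by positivity) ?_)
    rcases (norm_nonneg x).eq_or_lt with hx0 | hx0
    · rw [← hx0, Real.log_zero]; positivity
    · have := Real.log_le_sub_one_of_pos hx0
      exact le_min (by nlinarith) (by linarith)

end LevyMeasure

section LevyIntegral

variable {E : Type*} [NormedAddCommGroup E] [InnerProductSpace ℝ E] [MeasurableSpace E]
  [OpensMeasurableSpace E] {ν : Measure E}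

lemma continuous_integral_levyIntegrand
    (hν2 : ∫⁻ x, ENNReal.ofReal (min (‖x‖ ^ 2) 1) ∂ν < ⊤) :
    Continuous fun w => ∫ x, levyIntegrand w x ∂ν := by
  refine continuous_iff_continuousAt.2 fun w₀ => continuousAt_of_dominated
    (.of_forall fun w => (measurable_levyIntegrand w).aestronglyMeasurable) ?_
    ((integrable_min_sq_norm_one hν2).const_mul (2 * ((‖w₀‖ + 1) ^ 2 + 1)))
    (.of_forall fun x => (continuous_levyIntegrand_left x).continuousAt)
  filter_upwards [Metric.ball_mem_nhds w₀ one_pos] with w hw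
  refine .of_forall (norm_levyIntegrand_le_of_norm_le ?_)
  linarith [norm_le_norm_add_norm_sub' w w₀, mem_ball_iff_norm.1 hw]

lemma enorm_integral_levyIntegrand_le (ν : Measure E) (w : E) :
    ‖∫ x, levyIntegrand w x ∂ν‖ₑ ≤ 2 * (ENNReal.ofReal (‖w‖ ^ 2)
      * ∫⁻ x, ENNReal.ofReal (min (‖x‖ ^ 2) 1) ∂ν
      + ∫⁻ x in {x | 1 < ‖x‖}, ENNReal.ofReal (min 1 (‖w‖ * ‖x‖)) ∂ν) := by
  have hS : MeasurableSet {x : E | 1 < ‖x‖} := measurableSet_lt measurable_const measurable_norm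
  calc _ ≤ ∫⁻ x, ‖levyIntegrand w x‖ₑ ∂ν := enorm_integral_le_lintegral_enorm _
    _ ≤ ∫⁻ x, 2 * (ENNReal.ofReal (‖w‖ ^ 2) * ENNReal.ofReal (min (‖x‖ ^ 2) 1)
          + {x | 1 < ‖x‖}.indicator (fun y => ENNReal.ofReal (min 1 (‖w‖ * ‖y‖))) x) ∂ν := by
      refine lintegral_mono fun x => ?_
      have hind : {x : E | 1 < ‖x‖}.indicator (fun y => ENNReal.ofReal (min 1 (‖w‖ * ‖y‖))) x
          = ENNReal.ofReal ({x : E | 1 < ‖x‖}.indicator (fun y => min 1 (‖w‖ * ‖y‖)) x) :=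
        congrFun (Set.indicator_comp_of_zero ENNReal.ofReal_zero) x
      rw [← ofReal_norm, ← ENNReal.ofReal_mul (by positivity), ← ENNReal.ofReal_ofNat 2, hind,
        ← ENNReal.ofReal_add (by positivity) (Set.indicator_nonneg (fun _ _ => by positivity) _),
        ← ENNReal.ofReal_mul zero_le_two]
      exact ENNReal.ofReal_le_ofReal (norm_levyIntegrand_le w x)
    _ = _ := by
      rw [lintegral_const_mul' _ _ ENNReal.ofNat_ne_top, lintegral_add_left (by fun_prop),
        lintegral_const_mul' _ _ ENNReal.ofReal_ne_top, lintegral_indicator hS]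

end LevyIntegral

section ExpDecay

open Set

lemma lintegral_Ioi_min_one_exp_mul_le {c : ℝ} (hc : 0 < c) {a : ℝ} (ha : 0 ≤ a) :
    ∫⁻ s in Ioi 0, ENNReal.ofReal (min 1 (Real.exp (-c * s) * a))
      ≤ ENNReal.ofReal ((log⁺ a + 1) / c) := by
  -- past `t₀` one has `exp (-c * s) * a ≤ 1`, because `exp (log⁺ a) = max 1 a`
  set t₀ := log⁺ a / c
  have ht₀ : 0 ≤ t₀ := div_nonneg Real.posLog_nonneg hc.le
  have hhead : ∫⁻ s in Ioc 0 t₀, ENNReal.ofReal (min 1 (Real.exp (-c * s) * a))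
      ≤ ENNReal.ofReal t₀ :=
    calc _ ≤ ∫⁻ s in Ioc 0 t₀, 1 :=
          lintegral_mono fun s => ENNReal.ofReal_le_one.2 (min_le_left _ _)
      _ = ENNReal.ofReal t₀ := by rw [setLIntegral_const, one_mul, Real.volume_Ioc, sub_zero]
  have hdecay : Real.exp (-c * t₀) * a ≤ 1 := by
    rw [neg_mul, mul_div_cancel₀ _ hc.ne', Real.exp_neg, inv_mul_le_iff₀ (Real.exp_pos _),
      mul_one, Real.posLog_eq_log_max_one ha, Real.exp_log (by positivity)]
    exact le_max_right _ _
  have htail : ∫⁻ s in Ioi t₀, ENNReal.ofReal (min 1 (Real.exp (-c * s) * a))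
      ≤ ENNReal.ofReal (1 / c) :=
    calc _ ≤ ∫⁻ s in Ioi t₀, ENNReal.ofReal (Real.exp (-c * s) * a) :=
          lintegral_mono fun s => ENNReal.ofReal_le_ofReal (min_le_right _ _)
      _ = ENNReal.ofReal (∫ s in Ioi t₀, Real.exp (-c * s) * a) :=
          (ofReal_integral_eq_lintegral_ofReal ((exp_neg_integrableOn_Ioi t₀ hc).mul_const a)
            (.of_forall fun s => by positivity)).symm
      _ = ENNReal.ofReal (Real.exp (-c * t₀) * a / c) := by
          rw [integral_mul_const, integral_exp_mul_Ioi (by linarith)]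
          ring_nf
      _ ≤ ENNReal.ofReal (1 / c) :=
          ENNReal.ofReal_le_ofReal (div_le_div_of_nonneg_right hdecay hc.le)
  calc _ = ∫⁻ s in Ioc 0 t₀ ∪ Ioi t₀, ENNReal.ofReal (min 1 (Real.exp (-c * s) * a)) := by
        rw [Ioc_union_Ioi_eq_Ioi ht₀]
    _ ≤ _ := lintegral_union_le _ _ _
    _ ≤ ENNReal.ofReal t₀ + ENNReal.ofReal (1 / c) := add_le_add hhead htail
    _ = _ := by rw [← ENNReal.ofReal_add ht₀ (by positivity), add_div]

lemma lintegral_Ioi_lintegral_min_one_exp_mul_lt_top {E : Type*} [NormedAddCommGroup E]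
    [MeasurableSpace E] [OpensMeasurableSpace E] {μ : Measure E} [IsFiniteMeasure μ]
    (hlog : ∫⁻ x, ENNReal.ofReal (log⁺ ‖x‖) ∂μ < ⊤) {c : ℝ} (hc : 0 < c) {b : ℝ} (hb : 0 ≤ b) :
    ∫⁻ s in Ioi 0, ∫⁻ x, ENNReal.ofReal (min 1 (Real.exp (-c * s) * b * ‖x‖)) ∂μ < ⊤ := by
  simp_rw [mul_assoc]
  rw [lintegral_lintegral_swap (Measurable.aemeasurable (by fun_prop))]
  have hpt (x : E) : ENNReal.ofReal ((log⁺ (b * ‖x‖) + 1) / c)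
      ≤ ENNReal.ofReal ((log⁺ b + 1) / c) + ENNReal.ofReal c⁻¹ * ENNReal.ofReal (log⁺ ‖x‖) := by
    rw [← ENNReal.ofReal_mul (inv_nonneg.2 hc.le), ← ENNReal.ofReal_add
      (div_nonneg (add_nonneg Real.posLog_nonneg zero_le_one) hc.le)
      (mul_nonneg (inv_nonneg.2 hc.le) Real.posLog_nonneg)]
    refine ENNReal.ofReal_le_ofReal ?_
    calc _ ≤ (log⁺ b + log⁺ ‖x‖ + 1) / c := by gcongr; exact Real.posLog_mul
      _ = _ := by ring
  calc _ ≤ ∫⁻ x, (ENNReal.ofReal ((log⁺ b + 1) / c)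
          + ENNReal.ofReal c⁻¹ * ENNReal.ofReal (log⁺ ‖x‖)) ∂μ :=
        lintegral_mono fun x => (lintegral_Ioi_min_one_exp_mul_le hc (by positivity)).trans (hpt x)
    _ = ENNReal.ofReal ((log⁺ b + 1) / c) * μ univ
          + ENNReal.ofReal c⁻¹ * ∫⁻ x, ENNReal.ofReal (log⁺ ‖x‖) ∂μ := by
        rw [lintegral_add_left measurable_const, lintegral_const,
          lintegral_const_mul' _ _ ENNReal.ofReal_ne_top]
    _ < ⊤ := ENNReal.add_lt_top.2 ⟨ENNReal.mul_lt_top ENNReal.ofReal_lt_top (measure_lt_top μ _),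
        ENNReal.mul_lt_top ENNReal.ofReal_lt_top hlog⟩

end ExpDecay

section LevyExponent

variable {d : ℕ} (Q : Matrix (Fin d) (Fin d) ℝ) (γ : EuclideanSpace ℝ (Fin d))
  {ν : Measure (EuclideanSpace ℝ (Fin d))}

lemma continuous_levyExponent (hν2 : ∫⁻ x, ENNReal.ofReal (min (‖x‖ ^ 2) 1) ∂ν < ⊤) :
    Continuous (levyExponent Q γ ν) :=
  show Continuous fun z => -(1 / 2 : ℂ) * ((∑ i, ∑ j, z i * Q i j * z j : ℝ) : ℂ)
      + Complex.I * ((⟪γ, z⟫ : ℝ) : ℂ) + ∫ x, levyIntegrand z x ∂ν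
  from .add (by fun_prop) (continuous_integral_levyIntegrand hν2)

lemma exists_enorm_levyExponent_smul_le (hν2 : ∫⁻ x, ENNReal.ofReal (min (‖x‖ ^ 2) 1) ∂ν < ⊤)
    (z : EuclideanSpace ℝ (Fin d)) :
    ∃ A ≠ ⊤, ∀ t ∈ Set.Icc (0 : ℝ) 1, ‖levyExponent Q γ ν (t • z)‖ₑ
      ≤ A * ENNReal.ofReal t
        + 2 * ∫⁻ x in {x | 1 < ‖x‖}, ENNReal.ofReal (min 1 (t * ‖z‖ * ‖x‖)) ∂ν := by
  set q := ∑ i, ∑ j, z i * Q i j * z j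
  set M := ∫⁻ x, ENNReal.ofReal (min (‖x‖ ^ 2) 1) ∂ν
  refine ⟨ENNReal.ofReal (|q| / 2 + |⟪γ, z⟫|) + 2 * ENNReal.ofReal (‖z‖ ^ 2) * M,
    by finiteness, fun t ⟨ht0, ht1⟩ => ?_⟩
  have htt : t ^ 2 ≤ t := by nlinarith
  have hq : ∑ i, ∑ j, (t • z) i * Q i j * (t • z) j = t ^ 2 * q := by
    simp only [q, PiLp.smul_apply, smul_eq_mul, Finset.mul_sum]
    exact Finset.sum_congr rfl fun i _ => Finset.sum_congr rfl fun j _ => by ring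
  have hpoly : ‖-(1 / 2 : ℂ) * ((t ^ 2 * q : ℝ) : ℂ) + Complex.I * ((⟪γ, t • z⟫ : ℝ) : ℂ)‖
      ≤ (|q| / 2 + |⟪γ, z⟫|) * t := by
    refine (norm_add_le _ _).trans ?_
    rw [norm_mul, norm_mul, Complex.norm_I, Complex.norm_real, Complex.norm_real,
      real_inner_smul_right, Real.norm_eq_abs, Real.norm_eq_abs, abs_mul, abs_mul,
      abs_of_nonneg ht0, abs_of_nonneg (sq_nonneg t), one_mul,
      show ‖-(1 / 2 : ℂ)‖ = 1 / 2 by norm_num]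
    nlinarith [mul_le_mul_of_nonneg_right htt (abs_nonneg q)]
  have hint := enorm_integral_levyIntegrand_le ν (t • z)
  rw [norm_smul, Real.norm_eq_abs, abs_of_nonneg ht0] at hint
  have ht2 : ENNReal.ofReal ((t * ‖z‖) ^ 2) ≤ ENNReal.ofReal (‖z‖ ^ 2) * ENNReal.ofReal t := by
    rw [← ENNReal.ofReal_mul (sq_nonneg _)]
    exact ENNReal.ofReal_le_ofReal (by nlinarith [mul_le_mul_of_nonneg_right htt (sq_nonneg ‖z‖)])
  calc ‖levyExponent Q γ ν (t • z)‖ₑ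
      = ‖(-(1 / 2 : ℂ) * ((t ^ 2 * q : ℝ) : ℂ) + Complex.I * ((⟪γ, t • z⟫ : ℝ) : ℂ))
          + ∫ x, levyIntegrand (t • z) x ∂ν‖ₑ := by rw [← hq]; rfl
    _ ≤ ENNReal.ofReal ((|q| / 2 + |⟪γ, z⟫|) * t)
          + 2 * (ENNReal.ofReal ((t * ‖z‖) ^ 2) * M
            + ∫⁻ x in {x | 1 < ‖x‖}, ENNReal.ofReal (min 1 (t * ‖z‖ * ‖x‖)) ∂ν) :=
        (enorm_add_le _ _).trans (add_le_add (by rw [← ofReal_norm]; gcongr) hint)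
    _ ≤ ENNReal.ofReal ((|q| / 2 + |⟪γ, z⟫|) * t)
          + 2 * (ENNReal.ofReal (‖z‖ ^ 2) * ENNReal.ofReal t * M
            + ∫⁻ x in {x | 1 < ‖x‖}, ENNReal.ofReal (min 1 (t * ‖z‖ * ‖x‖)) ∂ν) := by gcongr
    _ = _ := by rw [ENNReal.ofReal_mul (by positivity)]; ring

end LevyExponent

theorem levyExponent_integrableOn_of_log_moment_general {d : ℕ}
    (Q : Matrix (Fin d) (Fin d) ℝ)
    (γ : EuclideanSpace ℝ (Fin d))
    (ν : Measure (EuclideanSpace ℝ (Fin d)))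
    (hν2 : ∫⁻ x, ENNReal.ofReal (min (‖x‖ ^ 2) 1) ∂ν < ⊤)
    (hνlog : ∫⁻ x in {x : EuclideanSpace ℝ (Fin d) | 2 < ‖x‖},
      ENNReal.ofReal (Real.log ‖x‖) ∂ν < ⊤)
    (c : ℝ) (hc : 0 < c) (z : EuclideanSpace ℝ (Fin d)) :
    IntegrableOn (fun s : ℝ => levyExponent Q γ ν (Real.exp (-c * s) • z))
      (Set.Ici 0) := by
  obtain ⟨A, hA, hψ⟩ := exists_enorm_levyExponent_smul_le Q γ hν2 z
  have : IsFiniteMeasure (ν.restrict {x | 1 < ‖x‖}) :=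
    isFiniteMeasure_restrict.2 ((measure_one_lt_norm_le_lintegral ν).trans_lt hν2).ne
  have hlog : ∫⁻ x in {x | 1 < ‖x‖}, ENNReal.ofReal (log⁺ ‖x‖) ∂ν < ⊤ :=
    (setLIntegral_le_lintegral _ _).trans_lt
      ((lintegral_posLog_norm_le ν).trans_lt (ENNReal.add_lt_top.2 ⟨hν2, hνlog⟩))
  rw [integrableOn_Ici_iff_integrableOn_Ioi]
  refine ⟨((continuous_levyExponent Q γ hν2).comp (by fun_prop)).aestronglyMeasurable, ?_⟩
  calc ∫⁻ s in Set.Ioi 0, ‖levyExponent Q γ ν (Real.exp (-c * s) • z)‖ₑ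
      ≤ ∫⁻ s in Set.Ioi 0, (A * ENNReal.ofReal (Real.exp (-c * s)) + 2 * ∫⁻ x in {x | 1 < ‖x‖},
          ENNReal.ofReal (min 1 (Real.exp (-c * s) * ‖z‖ * ‖x‖)) ∂ν) :=
        setLIntegral_mono' measurableSet_Ioi fun s (hs : 0 < s) =>
          hψ _ ⟨(Real.exp_pos _).le, Real.exp_le_one_iff.2 (by nlinarith)⟩
    _ = A * (∫⁻ s in Set.Ioi 0, ENNReal.ofReal (Real.exp (-c * s))) + 2 * ∫⁻ s in Set.Ioi 0,
          ∫⁻ x in {x | 1 < ‖x‖}, ENNReal.ofReal (min 1 (Real.exp (-c * s) * ‖z‖ * ‖x‖)) ∂ν := by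
        rw [lintegral_add_left (by fun_prop), lintegral_const_mul' _ _ hA,
          lintegral_const_mul' _ _ ENNReal.ofNat_ne_top]
    _ < ⊤ := ENNReal.add_lt_top.2
        ⟨ENNReal.mul_lt_top hA.lt_top (exp_neg_integrableOn_Ioi 0 hc).lintegral_lt_top,
          ENNReal.mul_lt_top ENNReal.ofNat_lt_top
            (lintegral_Ioi_lintegral_min_one_exp_mul_lt_top hlog hc (norm_nonneg z))⟩

/-- Under the logarithmic moment condition on the Lévy measure, the function
`s ↦ ψ(e^{−cs} z)` is Lebesgue integrable on `[0,∞)` for every `z`, where `ψ`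
is the Lévy–Khinchine exponent of the triplet `(Q, ν, γ)` and `c > 0`. -/
theorem levyExponent_integrableOn_of_log_moment {d : ℕ}
    (Q : Matrix (Fin d) (Fin d) ℝ) (hQsymm : Q.IsSymm) (hQpos : Q.PosSemidef)
    (γ : EuclideanSpace ℝ (Fin d))
    (ν : Measure (EuclideanSpace ℝ (Fin d)))
    (hν0 : ν {0} = 0)
    (hν2 : ∫⁻ x, ENNReal.ofReal (min (‖x‖ ^ 2) 1) ∂ν < ⊤)
    (hνlog : ∫⁻ x in {x : EuclideanSpace ℝ (Fin d) | 2 < ‖x‖},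
      ENNReal.ofReal (Real.log ‖x‖) ∂ν < ⊤)
    (c : ℝ) (hc : 0 < c) (z : EuclideanSpace ℝ (Fin d)) :
    IntegrableOn (fun s : ℝ => levyExponent Q γ ν (Real.exp (-c * s) • z))
      (Set.Ici 0) :=
  levyExponent_integrableOn_of_log_moment_general Q γ ν hν2 hνlog c hc z
end

section
/- Let ν be a measure on ℝ^d with ν({0}) = 0, ∫ min(|x|²,1) ν(dx) < ∞, and ∫_{|x|>2} log|x| ν(dx) < ∞, and let c > 0. Define ν_∞ on Borel sets B ⊆ ℝ^d by ν_∞(B) := (1/c) ∫_{ℝ^d} ∫_0^∞ 1_B(e^{−s} y) ds ν(dy). Then ν_∞ is a Lévy measure: ν_∞({0}) = 0 and ∫_{ℝ^d} min(|x|²,1) ν_∞(dx) < ∞. -/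
/-!
The measure `ν_∞` is `1/c` times the image of `ν ⊗ Leb|_{[0,∞)}` under `(y, s) ↦ e^{-s} y`, so
`∫ min(‖x‖², 1) dν_∞ = (1/c) ∫ ∫_0^∞ min(e^{-2s}‖y‖², 1) ds ν(dy)`. Along the orbit `s ↦ e^{-s} y`
the integrand is at most `1` until time `log⁺ ‖y‖`, when the orbit enters the unit ball, and
afterwards it decays like `min(‖y‖², 1) e^{log⁺ ‖y‖ - s}`; hence the inner integral is at most
`log⁺ ‖y‖ + min(‖y‖², 1)`. Finally `log⁺ ‖y‖ ≤ min(‖y‖², 1) + 1_{‖y‖ > 2} log ‖y‖`, which is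
`ν`-integrable by the two moment conditions. The atom at `0` vanishes because `e^{-s} y ≠ 0` for
`y ≠ 0`.
-/

open MeasureTheory Set Real
open scoped ENNReal

theorem exp_neg_mul_eq_exp_posLog_sub_mul {r : ℝ} (hr : 0 ≤ r) (s : ℝ) :
    exp (-s) * r = exp (log⁺ r - s) * min r 1 := by
  rcases le_or_gt r 1 with h | h
  · rw [(posLog_eq_zero_iff r).2 (abs_le.2 ⟨by linarith, h⟩), min_eq_left h, zero_sub]
  · rw [posLog_eq_log (by rw [abs_of_nonneg hr]; exact h.le), min_eq_right h.le, mul_one,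
      exp_sub, exp_log (by linarith), div_eq_inv_mul, exp_neg]

theorem lintegral_Ici_ofReal_exp_sub (L : ℝ) :
    ∫⁻ s in Ici L, ENNReal.ofReal (exp (L - s)) = 1 := by
  have hexp : (fun s => exp (L - s)) = fun s => exp L * exp (-s) := by
    funext s; rw [sub_eq_add_neg, exp_add]
  have hint : IntegrableOn (fun s => exp (L - s)) (Ioi L) := by
    rw [hexp]
    exact (by simpa using exp_neg_integrableOn_Ioi L one_pos :
      IntegrableOn (fun s => exp (-s)) (Ioi L)).const_mul _
  rw [← restrict_Ioi_eq_restrict_Ici, ← ofReal_integral_eq_lintegral_ofReal hint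
    (ae_of_all _ fun s => (exp_pos _).le), hexp, integral_const_mul, integral_exp_neg_Ioi,
    ← exp_add, add_neg_cancel, exp_zero, ENNReal.ofReal_one]

theorem lintegral_Ici_min_sq_exp_neg_mul_le {r : ℝ} (hr : 0 ≤ r) :
    ∫⁻ s in Ici 0, ENNReal.ofReal (min ((exp (-s) * r) ^ 2) 1) ≤
      ENNReal.ofReal (log⁺ r) + ENNReal.ofReal (min (r ^ 2) 1) := by
  set L := log⁺ r
  set m := min (r ^ 2) 1
  have head : ∫⁻ s in Ico 0 L, ENNReal.ofReal (min ((exp (-s) * r) ^ 2) 1) ≤ ENNReal.ofReal L :=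
    calc _ ≤ ∫⁻ _ in Ico 0 L, 1 :=
          lintegral_mono fun s => ENNReal.ofReal_le_one.2 (min_le_right _ _)
      _ = ENNReal.ofReal L := by simp
  have tail : ∫⁻ s in Ici L, ENNReal.ofReal (min ((exp (-s) * r) ^ 2) 1) ≤ ENNReal.ofReal m := by
    have hpt : ∀ s ∈ Ici L, ENNReal.ofReal (min ((exp (-s) * r) ^ 2) 1) ≤
        ENNReal.ofReal m * ENNReal.ofReal (exp (L - s)) := by
      intro s hs
      have he : exp (L - s) ≤ 1 := exp_le_one_iff.2 (sub_nonpos.2 hs)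
      rw [← ENNReal.ofReal_mul (le_min (sq_nonneg r) zero_le_one)]
      refine ENNReal.ofReal_le_ofReal ((min_le_left _ _).trans ?_)
      rw [exp_neg_mul_eq_exp_posLog_sub_mul hr, mul_pow, mul_comm m]
      gcongr
      · exact pow_le_of_le_one (exp_pos _).le he two_ne_zero
      · exact le_min (pow_le_pow_left₀ (le_min hr zero_le_one) (min_le_left _ _) 2)
          (pow_le_one₀ (le_min hr zero_le_one) (min_le_right _ _))
    calc _ ≤ ∫⁻ s in Ici L, ENNReal.ofReal m * ENNReal.ofReal (exp (L - s)) :=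
          setLIntegral_mono (by fun_prop) hpt
      _ = ENNReal.ofReal m := by
          rw [lintegral_const_mul' _ _ ENNReal.ofReal_ne_top, lintegral_Ici_ofReal_exp_sub, mul_one]
  calc _ ≤ (∫⁻ s in Ico 0 L, ENNReal.ofReal (min ((exp (-s) * r) ^ 2) 1)) +
        ∫⁻ s in Ici L, ENNReal.ofReal (min ((exp (-s) * r) ^ 2) 1) := by
        rw [← Ico_union_Ici_eq_Ici posLog_nonneg]; exact lintegral_union_le _ _ _
    _ ≤ _ := add_le_add head tail

theorem ofReal_posLog_norm_le {E : Type*} [SeminormedAddGroup E] (y : E) :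
    ENNReal.ofReal (log⁺ ‖y‖) ≤ ENNReal.ofReal (min (‖y‖ ^ 2) 1) +
      {x : E | 2 < ‖x‖}.indicator (fun x => ENNReal.ofReal (log ‖x‖)) y := by
  rcases le_or_gt ‖y‖ 2 with h2 | h2
  · rw [indicator_of_notMem (show y ∉ {x : E | 2 < ‖x‖} from not_lt.2 h2), add_zero]
    rcases le_or_gt ‖y‖ 1 with h1 | h1
    · rw [(posLog_eq_zero_iff _).2 (by rwa [abs_of_nonneg (norm_nonneg y)]), ENNReal.ofReal_zero]
      exact zero_le
    · rw [min_eq_right (one_le_pow₀ h1.le)]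
      refine ENNReal.ofReal_le_ofReal ?_
      calc log⁺ ‖y‖ ≤ log⁺ 2 := posLog_le_posLog (norm_nonneg y) h2
        _ = log 2 := posLog_eq_log (by norm_num)
        _ ≤ 1 := by linarith [log_two_lt_d9]
  · rw [indicator_of_mem (show y ∈ {x : E | 2 < ‖x‖} from h2),
      posLog_eq_log (by rw [abs_of_nonneg (norm_nonneg y)]; linarith)]
    exact le_add_self

section

variable {E : Type*} [NormedAddCommGroup E] [MeasurableSpace E]

theorem lintegral_posLog_norm_lt_top [OpensMeasurableSpace E] {ν : Measure E}
    (h2 : ∫⁻ x, ENNReal.ofReal (min (‖x‖ ^ 2) 1) ∂ν < ⊤)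
    (hlog : ∫⁻ x in {x : E | 2 < ‖x‖}, ENNReal.ofReal (log ‖x‖) ∂ν < ⊤) :
    ∫⁻ x, ENNReal.ofReal (log⁺ ‖x‖) ∂ν < ⊤ := by
  have hS : MeasurableSet {x : E | 2 < ‖x‖} := measurableSet_lt measurable_const measurable_norm
  calc _ ≤ ∫⁻ x, ENNReal.ofReal (min (‖x‖ ^ 2) 1) +
        {x : E | 2 < ‖x‖}.indicator (fun x => ENNReal.ofReal (log ‖x‖)) x ∂ν :=
        lintegral_mono ofReal_posLog_norm_le
    _ = (∫⁻ x, ENNReal.ofReal (min (‖x‖ ^ 2) 1) ∂ν) +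
        ∫⁻ x in {x : E | 2 < ‖x‖}, ENNReal.ofReal (log ‖x‖) ∂ν := by
        rw [lintegral_add_left (by fun_prop), lintegral_indicator hS]
    _ < ⊤ := ENNReal.add_lt_top.2 ⟨h2, hlog⟩

variable [NormedSpace ℝ E] {ν μ : Measure E} {a : ℝ≥0∞}

theorem measure_zero_eq_zero_of_apply_eq [MeasurableSingletonClass E] (hν0 : ν {0} = 0)
    (h : ∀ B : Set E, MeasurableSet B → μ B = a *
      ∫⁻ y, (∫⁻ s in Ici (0 : ℝ), B.indicator (fun _ => 1) (exp (-s) • y)) ∂ν) :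
    μ {0} = 0 := by
  have hvanish : (fun y => ∫⁻ s in Ici (0 : ℝ),
      ({0} : Set E).indicator (fun _ => (1 : ℝ≥0∞)) (exp (-s) • y)) =ᵐ[ν] 0 := by
    filter_upwards [compl_mem_ae_iff.2 hν0] with y hy
    simp_all [(exp_pos _).ne']
  rw [h _ (measurableSet_singleton 0), lintegral_congr_ae hvanish]
  simp

theorem lintegral_eq_mul_lintegral_of_apply_eq [BorelSpace E]
    (h : ∀ B : Set E, MeasurableSet B → μ B = a *
      ∫⁻ y, (∫⁻ s in Ici (0 : ℝ), B.indicator (fun _ => 1) (exp (-s) • y)) ∂ν)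
    {f : E → ℝ≥0∞} (hf : Measurable f) :
    ∫⁻ x, f x ∂μ = a * ∫⁻ y, (∫⁻ s in Ici (0 : ℝ), f (exp (-s) • y)) ∂ν := by
  set φ : E × ℝ → E := fun p => exp (-p.2) • p.1
  have hφ : Measurable φ := (measurable_snd.neg.exp).smul measurable_fst
  have hμ : μ = a • (ν.prod (volume.restrict (Ici 0))).map φ := by
    ext B hB
    rw [h B hB, Measure.smul_apply, smul_eq_mul, Measure.map_apply hφ hB,
      Measure.prod_apply (hφ hB)]
    congr 1
    refine lintegral_congr fun y => ?_
    exact lintegral_indicator_one (hφ.comp measurable_prodMk_left hB)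
  rw [hμ, lintegral_smul_measure, smul_eq_mul, lintegral_map hf hφ,
    lintegral_prod (fun p => f (φ p)) (hf.comp hφ).aemeasurable]

end

theorem nuInfty_is_levy_measure_general {d : ℕ}
    (ν : Measure (EuclideanSpace ℝ (Fin d)))
    (hν0 : ν {0} = 0)
    (hν2 : ∫⁻ x, ENNReal.ofReal (min (‖x‖ ^ 2) 1) ∂ν < ⊤)
    (hνlog : ∫⁻ x in {x : EuclideanSpace ℝ (Fin d) | 2 < ‖x‖},
      ENNReal.ofReal (Real.log ‖x‖) ∂ν < ⊤)
    (c : ℝ)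
    (νinf : Measure (EuclideanSpace ℝ (Fin d)))
    (hdef : ∀ B : Set (EuclideanSpace ℝ (Fin d)), MeasurableSet B →
      νinf B = ENNReal.ofReal (1 / c) *
        ∫⁻ y, (∫⁻ s in Set.Ici (0 : ℝ),
          Set.indicator B (fun _ => (1 : ENNReal)) (Real.exp (-s) • y)) ∂ν) :
    νinf {0} = 0 ∧ ∫⁻ x, ENNReal.ofReal (min (‖x‖ ^ 2) 1) ∂νinf < ⊤ := by
  refine ⟨measure_zero_eq_zero_of_apply_eq hν0 hdef, ?_⟩
  rw [lintegral_eq_mul_lintegral_of_apply_eq hdef (by fun_prop)]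
  refine ENNReal.mul_lt_top ENNReal.ofReal_lt_top ?_
  calc _ ≤ ∫⁻ y, ENNReal.ofReal (log⁺ ‖y‖) + ENNReal.ofReal (min (‖y‖ ^ 2) 1) ∂ν :=
        lintegral_mono fun y => by
          simpa only [norm_smul, norm_of_nonneg (exp_pos _).le] using
            lintegral_Ici_min_sq_exp_neg_mul_le (norm_nonneg y)
    _ < ⊤ := by
        rw [lintegral_add_left (by fun_prop)]
        exact ENNReal.add_lt_top.2 ⟨lintegral_posLog_norm_lt_top hν2 hνlog, hν2⟩

/-- If `ν` is a Lévy measure on `ℝ^d` with finite logarithmic moment at infinity and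
`c > 0`, then the measure `ν_∞(B) = (1/c) ∫_{ℝ^d} ∫_0^∞ 1_B(e^{−s} y) ds ν(dy)` is
again a Lévy measure: `ν_∞({0}) = 0` and `∫ min(|x|²,1) ν_∞(dx) < ∞`. -/
theorem nuInfty_is_levy_measure {d : ℕ}
    (ν : Measure (EuclideanSpace ℝ (Fin d)))
    (hν0 : ν {0} = 0)
    (hν2 : ∫⁻ x, ENNReal.ofReal (min (‖x‖ ^ 2) 1) ∂ν < ⊤)
    (hνlog : ∫⁻ x in {x : EuclideanSpace ℝ (Fin d) | 2 < ‖x‖},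
      ENNReal.ofReal (Real.log ‖x‖) ∂ν < ⊤)
    (c : ℝ) (hc : 0 < c)
    (νinf : Measure (EuclideanSpace ℝ (Fin d)))
    (hdef : ∀ B : Set (EuclideanSpace ℝ (Fin d)), MeasurableSet B →
      νinf B = ENNReal.ofReal (1 / c) *
        ∫⁻ y, (∫⁻ s in Set.Ici (0 : ℝ),
          Set.indicator B (fun _ => (1 : ENNReal)) (Real.exp (-s) • y)) ∂ν) :
    νinf {0} = 0 ∧ ∫⁻ x, ENNReal.ofReal (min (‖x‖ ^ 2) 1) ∂νinf < ⊤ :=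
  nuInfty_is_levy_measure_general ν hν0 hν2 hνlog c νinf hdef
end
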